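/- arXiv:2105.13875 — 9 statements merged into one kernel-verified Lean document; each statement's English description precedes it below -/
import Mathlib

section
/- For every integer n ≥ 7, the sum of minimal excludants over all partitions of n+1 into distinct parts is strictly greater than the sum of minimal excludants over all partitions of n into distinct parts. -/
/-!
Raising the largest part of a partition of `n` by one (`bump`) embeds `D(n)` into `D(n + 1)`
and never lowers the mex, except at the staircase `{1, …, k}`, where it lowers it by at most
one; there is at most one staircase partition of `n`, and none for `7 ≤ n ≤ 9`. Partitions of
`n + 1` whose two largest parts are consecutive lie outside the image, and each adds a mex of
at least `1` to `σ_d mex(n + 1)`. For `n + 1 ≥ 8` there is at least one of them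
(`{1, k - 1, k}` or `{k, k + 1}`), and there are at least two once `n + 1 ≥ 11`.
-/

/-- The set of partitions of `n` into distinct parts, encoded as finsets of
positive integers summing to `n`. -/
def Dpart (n : ℕ) : Finset (Finset ℕ) :=
  (Finset.Icc 1 n).powerset.filter (fun S => S.sum id = n)

/-- The minimal excludant: the least positive integer not occurring as a part. -/
noncomputable def pmex (S : Finset ℕ) : ℕ := sInf {m : ℕ | 0 < m ∧ m ∉ S}

/-- The sum of minimal excludants over all distinct-parts partitions of `n`. -/
noncomputable def sigmadmex (n : ℕ) : ℕ := ∑ S ∈ Dpart n, pmex S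

open Finset

namespace Dpart

lemma mem_iff {n : ℕ} {S : Finset ℕ} :
    S ∈ Dpart n ↔ S ⊆ Icc 1 n ∧ S.sum id = n := by
  simp [Dpart]

lemma pos_of_mem {n : ℕ} {S : Finset ℕ} (hS : S ∈ Dpart n) {x : ℕ} (hx : x ∈ S) : 0 < x :=
  (mem_Icc.1 ((mem_iff.1 hS).1 hx)).1

lemma nonempty_of_mem {n : ℕ} (hn : n ≠ 0) {S : Finset ℕ} (hS : S ∈ Dpart n) : S.Nonempty := by
  rw [nonempty_iff_ne_empty]
  rintro rfl
  exact hn (mem_iff.1 hS).2.symm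

lemma eq_of_subset {n : ℕ} {S T : Finset ℕ} (hS : S ∈ Dpart n) (hT : T ∈ Dpart n)
    (hST : S ⊆ T) : S = T := by
  by_contra hne
  obtain ⟨x, hxT, hxS⟩ := exists_of_ssubset (Finset.ssubset_iff_subset_ne.2 ⟨hST, hne⟩)
  have := sum_lt_sum_of_subset (f := id) hST hxT hxS (pos_of_mem hT hxT)
    (fun _ _ _ => Nat.zero_le _)
  rw [(mem_iff.1 hS).2, (mem_iff.1 hT).2] at this
  exact this.false

end Dpart

lemma sup_id_mem {S : Finset ℕ} (hS : S.Nonempty) : S.sup id ∈ S := by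
  obtain ⟨x, hx, hsup⟩ := exists_mem_eq_sup S hS id
  rwa [hsup]

lemma sup_add_one_notMem (S : Finset ℕ) : S.sup id + 1 ∉ S := fun h =>
  (le_sup (f := id) h).not_gt (Nat.lt_succ_self _)

lemma pmex_spec (S : Finset ℕ) : 0 < pmex S ∧ pmex S ∉ S :=
  Nat.sInf_mem (s := {m | 0 < m ∧ m ∉ S}) ⟨_, Nat.succ_pos _, sup_add_one_notMem S⟩

lemma pmex_pos (S : Finset ℕ) : 0 < pmex S := (pmex_spec S).1

lemma pmex_notMem (S : Finset ℕ) : pmex S ∉ S := (pmex_spec S).2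

lemma pmex_le {S : Finset ℕ} {q : ℕ} (hq : 0 < q) (hqS : q ∉ S) : pmex S ≤ q :=
  Nat.sInf_le ⟨hq, hqS⟩

lemma mem_of_lt_pmex {S : Finset ℕ} {q : ℕ} (hq : 0 < q) (hqS : q < pmex S) : q ∈ S := by
  by_contra h
  exact (pmex_le hq h).not_gt hqS

lemma le_pmex_iff {S : Finset ℕ} {p : ℕ} : p ≤ pmex S ↔ ∀ q, 0 < q → q < p → q ∈ S :=
  ⟨fun h _ hq hqp => mem_of_lt_pmex hq (hqp.trans_le h),
    fun h => not_lt.1 fun hlt => pmex_notMem S (h _ (pmex_pos S) hlt)⟩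

lemma pmex_le_sup_add_one (S : Finset ℕ) : pmex S ≤ S.sup id + 1 :=
  pmex_le (Nat.succ_pos _) (sup_add_one_notMem S)

lemma pmex_ne_sup (S : Finset ℕ) : pmex S ≠ S.sup id := by
  rcases S.eq_empty_or_nonempty with rfl | hS
  · exact (pmex_pos ∅).ne'
  · exact fun h => pmex_notMem S (h ▸ sup_id_mem hS)

lemma subset_of_sup_lt_pmex {S T : Finset ℕ} (hS : ∀ x ∈ S, 0 < x) (h : S.sup id < pmex T) :
    S ⊆ T := fun x hx =>
  mem_of_lt_pmex (hS x hx) ((le_sup (f := id) hx).trans_lt h)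

def bump (S : Finset ℕ) : Finset ℕ := insert (S.sup id + 1) (S.erase (S.sup id))

lemma sup_bump (S : Finset ℕ) : (bump S).sup id = S.sup id + 1 := by
  have : (S.erase (S.sup id)).sup id ≤ S.sup id := sup_mono (erase_subset _ _)
  simp only [bump, sup_insert, id_eq]
  omega

lemma sup_notMem_bump (S : Finset ℕ) : S.sup id ∉ bump S := by
  simp [bump]

lemma sum_bump (S : Finset ℕ) : (bump S).sum id = S.sum id + 1 := by
  have hnotMem : S.sup id + 1 ∉ S.erase (S.sup id) := fun h =>
    sup_add_one_notMem S (mem_of_mem_erase h)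
  rw [bump, sum_insert hnotMem]
  rcases S.eq_empty_or_nonempty with rfl | hS
  · simp
  · rw [← add_sum_erase S id (sup_id_mem hS)]
    simp only [id_eq]
    omega

lemma bump_mem_Dpart {n : ℕ} {S : Finset ℕ} (hS : S ∈ Dpart n) : bump S ∈ Dpart (n + 1) := by
  refine Dpart.mem_iff.2 ⟨fun x hx => ?_, by rw [sum_bump, (Dpart.mem_iff.1 hS).2]⟩
  rw [bump, mem_insert] at hx
  rcases hx with rfl | hx
  · have hsup : S.sup id ≤ n :=
      Finset.sup_le fun y hy => (mem_Icc.1 ((Dpart.mem_iff.1 hS).1 hy)).2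
    exact mem_Icc.2 ⟨Nat.succ_pos _, Nat.succ_le_succ hsup⟩
  · have := mem_Icc.1 ((Dpart.mem_iff.1 hS).1 (mem_of_mem_erase hx))
    exact mem_Icc.2 ⟨this.1, this.2.trans (Nat.le_succ n)⟩

lemma bump_injOn : Set.InjOn bump {S | S.Nonempty} := by
  have unbump : ∀ S : Finset ℕ, S.Nonempty →
      insert ((bump S).sup id - 1) ((bump S).erase ((bump S).sup id)) = S := by
    intro S hS
    rw [sup_bump, Nat.add_sub_cancel, bump, erase_insert
      fun h => sup_add_one_notMem S (mem_of_mem_erase h), insert_erase (sup_id_mem hS)]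
  intro S hS T hT h
  rw [← unbump S hS, ← unbump T hT, h]

lemma min_pmex_sup_le_pmex_bump (S : Finset ℕ) : min (pmex S) (S.sup id) ≤ pmex (bump S) :=
  le_pmex_iff.2 fun _ hq hlt =>
    mem_insert_of_mem (mem_erase.2 ⟨(lt_min_iff.1 hlt).2.ne,
      mem_of_lt_pmex hq (lt_min_iff.1 hlt).1⟩)

lemma pmex_le_pmex_bump_add (S : Finset ℕ) :
    pmex S ≤ pmex (bump S) + if S.sup id < pmex S then 1 else 0 := by
  have hmin := min_pmex_sup_le_pmex_bump S
  have := pmex_le_sup_add_one S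
  have := pmex_ne_sup S
  split_ifs <;> omega

/-- For a set of positive integers, `S.sup id < pmex S` says exactly that `S = {1, …, k}`. -/
noncomputable def staircaseParts (n : ℕ) : Finset (Finset ℕ) :=
  (Dpart n).filter fun S => S.sup id < pmex S

def topConsecutiveParts (n : ℕ) : Finset (Finset ℕ) :=
  (Dpart n).filter fun T => T.sup id - 1 ∈ T

lemma sigmadmex_le_sum_pmex_bump (n : ℕ) :
    sigmadmex n ≤ ∑ S ∈ Dpart n, pmex (bump S) + #(staircaseParts n) := by
  rw [staircaseParts, card_filter, ← sum_add_distrib]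
  exact sum_le_sum fun S _ => pmex_le_pmex_bump_add S

lemma disjoint_image_bump_topConsecutiveParts (n : ℕ) :
    Disjoint ((Dpart n).image bump) (topConsecutiveParts (n + 1)) := by
  rw [disjoint_left]
  rintro _ hT hT'
  obtain ⟨S, -, rfl⟩ := mem_image.1 hT
  have := (mem_filter.1 hT').2
  rw [sup_bump, Nat.add_sub_cancel] at this
  exact sup_notMem_bump S this

lemma sigmadmex_add_card_le (n : ℕ) (hn : n ≠ 0) :
    sigmadmex n + #(topConsecutiveParts (n + 1)) ≤
      sigmadmex (n + 1) + #(staircaseParts n) := by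
  have hsum_image : ∑ T ∈ (Dpart n).image bump, pmex T = ∑ S ∈ Dpart n, pmex (bump S) :=
    sum_image fun S hS T hT => bump_injOn (Dpart.nonempty_of_mem hn hS)
      (Dpart.nonempty_of_mem hn hT)
  have hcard_le : #(topConsecutiveParts (n + 1)) ≤ ∑ T ∈ topConsecutiveParts (n + 1), pmex T := by
    simpa using card_nsmul_le_sum _ pmex 1 fun T _ => pmex_pos T
  have hsubset : (Dpart n).image bump ∪ topConsecutiveParts (n + 1) ⊆ Dpart (n + 1) :=
    union_subset (image_subset_iff.2 fun S hS => bump_mem_Dpart hS)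
      (filter_subset _ _)
  have hunion : ∑ T ∈ (Dpart n).image bump ∪ topConsecutiveParts (n + 1), pmex T ≤
      sigmadmex (n + 1) := sum_le_sum_of_subset hsubset
  rw [sum_union (disjoint_image_bump_topConsecutiveParts n), hsum_image] at hunion
  have := sigmadmex_le_sum_pmex_bump n
  omega

lemma card_staircaseParts_le_one (n : ℕ) : #(staircaseParts n) ≤ 1 := by
  refine card_le_one.2 fun S hS T hT => ?_
  obtain ⟨hS, hSst⟩ := mem_filter.1 hS
  obtain ⟨hT, hTst⟩ := mem_filter.1 hT
  rcases le_total (S.sup id) (T.sup id) with h | h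
  · exact Dpart.eq_of_subset hS hT
      (subset_of_sup_lt_pmex (fun _ => Dpart.pos_of_mem hS) (h.trans_lt hTst))
  · exact (Dpart.eq_of_subset hT hS
      (subset_of_sup_lt_pmex (fun _ => Dpart.pos_of_mem hT) (h.trans_lt hSst))).symm

/-- `7, 8, 9` lie strictly between the triangular numbers `1 + 2 + 3` and `1 + 2 + 3 + 4`. -/
lemma staircaseParts_eq_empty {n : ℕ} (h7 : 7 ≤ n) (h9 : n ≤ 9) : staircaseParts n = ∅ := by
  refine filter_eq_empty_iff.2 fun S hS hst => ?_
  have hsum := (Dpart.mem_iff.1 hS).2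
  rcases le_or_gt (S.sup id) 3 with h3 | h4
  · have hsub : S ⊆ Icc 1 3 := fun x hx =>
      mem_Icc.2 ⟨Dpart.pos_of_mem hS hx, (le_sup (f := id) hx).trans h3⟩
    have : S.sum id ≤ (Icc 1 3).sum id := sum_le_sum_of_subset hsub
    rw [show (Icc 1 3).sum id = 6 by rfl] at this
    omega
  · have hsub : Icc 1 4 ⊆ S := subset_of_sup_lt_pmex (fun x hx => (mem_Icc.1 hx).1)
      (by rw [show (Icc 1 4).sup id = 4 by rfl]; omega)
    have : (Icc 1 4).sum id ≤ S.sum id := sum_le_sum_of_subset hsub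
    rw [show (Icc 1 4).sum id = 10 by rfl] at this
    omega

lemma pair_mem_topConsecutiveParts {b c m : ℕ} (hb : 0 < b) (hc : c = b + 1) (hm : b + c = m) :
    {b, c} ∈ topConsecutiveParts m := by
  subst hc hm
  refine mem_filter.2 ⟨Dpart.mem_iff.2 ⟨?_, ?_⟩, ?_⟩
  · simp only [insert_subset_iff, singleton_subset_iff, mem_Icc]
    omega
  · rw [sum_pair (by omega)]
    rfl
  · simp [sup_insert]

lemma triple_mem_topConsecutiveParts {a b c m : ℕ} (ha : 0 < a) (hab : a < b) (hc : c = b + 1)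
    (hm : a + b + c = m) : {a, b, c} ∈ topConsecutiveParts m := by
  subst hc hm
  refine mem_filter.2 ⟨Dpart.mem_iff.2 ⟨?_, ?_⟩, ?_⟩
  · simp only [insert_subset_iff, singleton_subset_iff, mem_Icc]
    omega
  · rw [sum_insert (by simp; omega), sum_pair (by omega)]
    simp only [id_eq]
    omega
  · simp only [sup_insert, sup_singleton, id_eq, mem_insert, mem_singleton]
    omega

lemma card_topConsecutiveParts_pos {m : ℕ} (hm : 5 ≤ m) : 0 < #(topConsecutiveParts m) := by
  obtain ⟨k, rfl | rfl⟩ := Nat.even_or_odd' m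
  · exact card_pos.2 ⟨_, triple_mem_topConsecutiveParts (a := 1) (b := k - 1) (c := k)
      (by omega) (by omega) (by omega) (by omega)⟩
  · exact card_pos.2 ⟨_, pair_mem_topConsecutiveParts (b := k) (c := k + 1)
      (by omega) rfl (by omega)⟩

lemma one_lt_card_topConsecutiveParts {m : ℕ} (hm : 11 ≤ m) : 1 < #(topConsecutiveParts m) := by
  obtain ⟨k, rfl | rfl⟩ := Nat.even_or_odd' m
  · refine one_lt_card.2 ⟨{1, k - 1, k}, triple_mem_topConsecutiveParts (by omega) (by omega)
      (by omega) (by omega), {3, k - 2, k - 1}, triple_mem_topConsecutiveParts (by omega)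
      (by omega) (by omega) (by omega), ne_of_mem_of_not_mem' (a := k) (by simp) ?_⟩
    simp only [mem_insert, mem_singleton]
    omega
  · refine one_lt_card.2 ⟨{k, k + 1}, pair_mem_topConsecutiveParts (by omega) rfl (by omega),
      {2, k - 1, k}, triple_mem_topConsecutiveParts (by omega) (by omega) (by omega) (by omega),
      ne_of_mem_of_not_mem' (a := k + 1) (by simp) ?_⟩
    simp only [mem_insert, mem_singleton]
    omega

/-- For every integer `n ≥ 7`, `σ_d mex(n+1) > σ_d mex(n)`. -/
theorem stmt_0 (n : ℕ) (hn : 7 ≤ n) : sigmadmex n < sigmadmex (n + 1) := by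
  have hcount := sigmadmex_add_card_le n (by omega)
  rcases le_or_gt n 9 with h9 | h10
  · have hfresh := card_topConsecutiveParts_pos (m := n + 1) (by omega)
    rw [staircaseParts_eq_empty hn h9, card_empty] at hcount
    omega
  · have hfresh := one_lt_card_topConsecutiveParts (m := n + 1) (by omega)
    have hstair := card_staircaseParts_le_one n
    omega
end

section
/- For every positive integer n that is not a triangular number, the map sending a distinct-parts partition (a_1 > a_2 > ... > a_k) of n to the distinct-parts partition (a_1 + 1, a_2, ..., a_k) of n+1 preserves the minimal excludant. -/
/-- If `n` is positive and not triangular, replacing the largest part `a₁` of a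
distinct-parts partition of `n` by `a₁ + 1` yields a distinct-parts partition of
`n + 1` with the same minimal excludant. -/
theorem stmt_1 (n : ℕ) (hn : 0 < n) (htri : ¬ ∃ k : ℕ, 0 < k ∧ n = k * (k + 1) / 2)
    (S : Finset ℕ) (hS : S ∈ Dpart n) (hne : S.Nonempty) :
    insert (S.max' hne + 1) (S.erase (S.max' hne)) ∈ Dpart (n + 1) ∧
      pmex (insert (S.max' hne + 1) (S.erase (S.max' hne))) = pmex S := by
  simp only [Dpart, Finset.mem_filter, Finset.mem_powerset] at hS ⊢
  obtain ⟨hsub, hsum⟩ := hS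
  set M := S.max' hne with hM
  have hMS : M ∈ S := S.max'_mem hne
  have hMIcc := hsub hMS
  rw [Finset.mem_Icc] at hMIcc
  have hle : ∀ a ∈ S, a ≤ M := fun a ha => S.le_max' a ha
  have hpos : ∀ a ∈ S, 1 ≤ a := fun a ha => (Finset.mem_Icc.mp (hsub ha)).1
  set T := insert (M + 1) (S.erase M) with hT
  have hM1 : M + 1 ∉ S := fun h => by have := hle _ h; omega
  have hM1e : M + 1 ∉ S.erase M := fun h => hM1 (Finset.mem_of_mem_erase h)
  have hTsub : T ⊆ Finset.Icc 1 (n + 1) := by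
    intro a ha
    rw [hT, Finset.mem_insert] at ha
    rcases ha with rfl | ha
    · rw [Finset.mem_Icc]; omega
    · have := Finset.mem_Icc.mp (hsub (Finset.mem_of_mem_erase ha))
      rw [Finset.mem_Icc]; omega
  have hTsum : T.sum id = n + 1 := by
    rw [hT, Finset.sum_insert hM1e]
    have h2 : id M + ∑ x ∈ S.erase M, id x = ∑ x ∈ S, id x :=
      Finset.add_sum_erase S id hMS
    have h3 : ∑ x ∈ S, id x = n := hsum
    simp only [id_eq] at h2 h3 ⊢
    omega
  refine ⟨⟨hTsub, hTsum⟩, ?_⟩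
  unfold pmex
  -- pmex facts
  have hsetne : {m : ℕ | 0 < m ∧ m ∉ S}.Nonempty := ⟨M + 1, by omega, hM1⟩
  have hmem := Nat.sInf_mem hsetne
  set m := sInf {m : ℕ | 0 < m ∧ m ∉ S} with hm
  have hmem' : 0 < m ∧ m ∉ S := hmem
  have hlt : ∀ j, 0 < j → j < m → j ∈ S := by
    intro j hj hjm
    by_contra hjS
    exact absurd (Nat.sInf_le (show j ∈ {m : ℕ | 0 < m ∧ m ∉ S} from ⟨hj, hjS⟩)) (by omega)
  have hmM : m < M := by
    rcases lt_trichotomy m M with h | h | h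
    · exact h
    · exact absurd hMS (h ▸ hmem'.2)
    · exfalso
      apply htri
      refine ⟨M, by omega, ?_⟩
      have hSeq : S = Finset.Icc 1 M := by
        apply Finset.Subset.antisymm
        · intro a ha; rw [Finset.mem_Icc]; exact ⟨hpos a ha, hle a ha⟩
        · intro a ha
          rw [Finset.mem_Icc] at ha
          exact hlt a ha.1 (by omega)
      have : (Finset.Icc 1 M).sum id = M * (M + 1) / 2 := by
        have h0 : ∑ i ∈ Finset.range (M+1), i = 0 + ∑ i ∈ Finset.Ico 1 (M+1), i := by
          rw [Finset.range_eq_Ico]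
          exact Finset.sum_eq_sum_Ico_succ_bot (by omega) _
        have h2 := Finset.sum_range_id_mul_two (M + 1)
        have h4 : (Finset.Icc 1 M).sum id = ∑ i ∈ Finset.Ico 1 (M+1), i := by
          rw [← Finset.Ico_add_one_right_eq_Icc]; rfl
        have h5 : (M + 1) * (M + 1 - 1) = M * (M + 1) := by
          rw [Nat.add_sub_cancel]; ring
        omega
      rw [hSeq, this] at hsum
      omega
  have hmT : m ∉ T := by
    rw [hT, Finset.mem_insert]
    rintro (h | h)
    · omega
    · exact hmem'.2 (Finset.mem_of_mem_erase h)
  have hTne : {m' : ℕ | 0 < m' ∧ m' ∉ T}.Nonempty := ⟨m, hmem'.1, hmT⟩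
  apply le_antisymm
  · exact Nat.sInf_le ⟨hmem'.1, hmT⟩
  · apply le_csInf hTne
    rintro a ⟨ha0, haT⟩
    by_contra h
    push_neg at h
    have haS : a ∈ S := hlt a ha0 h
    have : a ∈ T := by
      rw [hT, Finset.mem_insert]
      right
      exact Finset.mem_erase.mpr ⟨by omega, haS⟩
    exact haT this
end

section
/- For each nonnegative integer i and each integer n, the number of partitions of n into distinct parts whose minimal excludant exceeds i equals the number of partitions of n − i(i+1)/2 into distinct parts all of whose parts are greater than i. -/
/-- `D_i(n)`: the number of distinct-parts partitions of `n` with mex exceeding `i`. -/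
noncomputable def Dcount (i n : ℕ) : ℕ := ((Dpart n).filter (fun S => i < pmex S)).card

/-- The number of distinct-parts partitions with all parts `> i` and sum equal to the
integer `n - i(i+1)/2` (there are none when this integer is negative). -/
def pdGt (n i : ℕ) : ℕ :=
  (((Finset.Icc 1 n).powerset).filter
    (fun S => (∀ x ∈ S, i < x) ∧ ((S.sum id : ℕ) : ℤ) = (n : ℤ) - (i * (i + 1) / 2 : ℕ))).card

/-!
A partition with mex greater than `i` contains each of `1, …, i`; removing these parts is a
bijection onto the partitions of `n - i(i+1)/2` whose parts all exceed `i`, with inverse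
adding them back.
-/

open Finset

lemma sum_Icc_one_id (i : ℕ) : (Icc 1 i).sum id = i * (i + 1) / 2 := by
  induction i with
  | zero => rfl
  | succ k ih =>
    rw [sum_Icc_succ_top (by omega), ih, id]
    have := Nat.even_mul_succ_self k
    grind

lemma exists_pos_notMem (S : Finset ℕ) : ∃ m, 0 < m ∧ m ∉ S :=
  ⟨S.sup id + 1, by omega, fun h => (le_sup (f := id) h).not_gt (Nat.lt_succ_self _)⟩

lemma lt_pmex_iff (S : Finset ℕ) (i : ℕ) : i < pmex S ↔ Icc 1 i ⊆ S := by
  constructor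
  · intro h m hm
    by_contra hmS
    have : pmex S ≤ m := Nat.sInf_le ⟨(mem_Icc.mp hm).1, hmS⟩
    grind
  · intro h
    obtain ⟨hpos, hnot⟩ := Nat.sInf_mem (exists_pos_notMem S)
    by_contra! hle
    exact hnot (h (mem_Icc.mpr ⟨hpos, hle⟩))

lemma disjoint_Icc_one_of_forall_lt {T : Finset ℕ} {i : ℕ} (hT : ∀ x ∈ T, i < x) :
    Disjoint T (Icc 1 i) :=
  disjoint_left.mpr fun x hx hx' => by grind

lemma Dcount_eq_card (i n : ℕ) :
    Dcount i n = #{S ∈ (Icc 1 n).powerset | Icc 1 i ⊆ S ∧ S.sum id = n} := by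
  simp only [Dcount, Dpart, filter_filter, lt_pmex_iff, and_comm]

/-- Since a sum of naturals is nonnegative, the integer equation of `pdGt` is a natural one. -/
lemma pdGt_eq_card (n i : ℕ) :
    pdGt n i = #{T ∈ (Icc 1 n).powerset | (∀ x ∈ T, i < x) ∧ T.sum id + i * (i + 1) / 2 = n} := by
  unfold pdGt
  congr 1
  refine filter_congr fun T _ => and_congr_right fun _ => ?_
  omega

/-- `D_i(n) = p_d(n − i(i+1)/2, i)`. -/
theorem stmt_2 (i n : ℕ) : Dcount i n = pdGt n i := by
  rw [Dcount_eq_card, pdGt_eq_card]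
  refine card_nbij' (· \ Icc 1 i) (· ∪ Icc 1 i) ?_ ?_ ?_ ?_
  · intro S hS
    simp only [mem_coe, mem_filter, mem_powerset] at hS ⊢
    obtain ⟨hSn, hiS, hsum⟩ := hS
    refine ⟨sdiff_subset.trans hSn, fun x hx => by grind, ?_⟩
    rw [← sum_Icc_one_id, sum_sdiff hiS, hsum]
  · intro T hT
    simp only [mem_coe, mem_filter, mem_powerset] at hT ⊢
    obtain ⟨hTn, hTi, hsum⟩ := hT
    have hunion : (T ∪ Icc 1 i).sum id = n := by
      rw [sum_union (disjoint_Icc_one_of_forall_lt hTi), sum_Icc_one_id, hsum]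
    refine ⟨union_subset hTn fun x hx => ?_, subset_union_right, hunion⟩
    have : x ≤ (T ∪ Icc 1 i).sum id :=
      single_le_sum (f := id) (fun _ _ => Nat.zero_le _) (mem_union_right T hx)
    grind
  · intro S hS
    simp only [mem_coe, mem_filter, mem_powerset] at hS
    exact sdiff_union_of_subset hS.2.1
  · intro T hT
    simp only [mem_coe, mem_filter, mem_powerset] at hT
    exact (union_sdiff_right _ _).trans (sdiff_eq_self_of_disjoint
      (disjoint_Icc_one_of_forall_lt hT.2.1))
end

section
/- As formal power series in q, Σ_{n≥0} q^{(2n+1)n} / (−q; q)_{2n+1} = Σ_{n≥0} (−1)^n q^{n(n+1)/2} / (−q; q)_n, where binom(2n+1, 2) = n(2n+1). -/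
open PowerSeries Finset

/-- `Σ_{n ≥ 0} q^{n(2n+1)} / (−q;q)_{2n+1}` as a formal power series over `ℚ`
(the term of index `n` has order `n(2n+1) ≥ n`). -/
noncomputable def lhsSeries : PowerSeries ℚ :=
  PowerSeries.mk fun N =>
    coeff N (∑ n ∈ Finset.range (N + 2),
      (X : PowerSeries ℚ) ^ (n * (2 * n + 1)) *
        (∏ k ∈ Finset.range (2 * n + 1), (1 + (X : PowerSeries ℚ) ^ (k + 1)))⁻¹)

/-- `Σ_{n ≥ 0} (−1)^n q^{n(n+1)/2} / (−q;q)_n` as a formal power series over `ℚ`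
(the term of index `n` has order `n(n+1)/2 ≥ n`). -/
noncomputable def rhsSeries : PowerSeries ℚ :=
  PowerSeries.mk fun N =>
    coeff N (∑ n ∈ Finset.range (N + 2),
      ((-1 : PowerSeries ℚ)) ^ n * (X : PowerSeries ℚ) ^ (n * (n + 1) / 2) *
        (∏ k ∈ Finset.range n, (1 + (X : PowerSeries ℚ) ^ (k + 1)))⁻¹)

/-!
The terms `a m = (-1)^m q^{m(m+1)/2} / (-q;q)_m` of the right-hand side pair up:
since `(-q;q)_{2n+1} = (-q;q)_{2n} (1 + q^{2n+1})`,
`a (2n) + a (2n+1) = q^{n(2n+1)} (1 + q^{2n+1} - q^{2n+1}) / (-q;q)_{2n+1}`,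
which is the `n`-th term of the left-hand side. Both truncated sums defining the
coefficient of `q^N` may then be compared, because `a m` has order `m(m+1)/2 > N` for `m > N`.
-/

theorem Finset.sum_range_two_mul {M : Type*} [AddCommMonoid M] (f : ℕ → M) (n : ℕ) :
    ∑ i ∈ range (2 * n), f i = ∑ i ∈ range n, (f (2 * i) + f (2 * i + 1)) := by
  induction n with
  | zero => simp
  | succ n ih => rw [Nat.mul_succ, sum_range_succ, sum_range_succ, sum_range_succ, ih, add_assoc]

namespace PowerSeries

variable {R : Type*} [Semiring R]

theorem coeff_sum_range_eq_of_coeff_eq_zero {f : ℕ → R⟦X⟧} {N n n' : ℕ} (hn : n ≤ n')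
    (hf : ∀ m, n ≤ m → coeff N (f m) = 0) :
    coeff N (∑ m ∈ range n', f m) = coeff N (∑ m ∈ range n, f m) := by
  simp only [map_sum]
  refine (sum_subset (range_subset_range.mpr hn) fun m _ hm => hf m ?_).symm
  simpa using hm

theorem coeff_X_pow_mul_of_lt {N e : ℕ} (h : N < e) (f : R⟦X⟧) : coeff N (X ^ e * f) = 0 := by
  rw [coeff_X_pow_mul', if_neg h.not_ge]

end PowerSeries

noncomputable def negQPochhammer (m : ℕ) : ℚ⟦X⟧ :=
  ∏ k ∈ range m, (1 + X ^ (k + 1))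

theorem negQPochhammer_succ (m : ℕ) :
    negQPochhammer (m + 1) = negQPochhammer m * (1 + X ^ (m + 1)) :=
  prod_range_succ _ _

theorem inv_negQPochhammer_eq (m : ℕ) :
    (negQPochhammer m)⁻¹ = (1 + X ^ (m + 1)) * (negQPochhammer (m + 1))⁻¹ := by
  rw [negQPochhammer_succ, PowerSeries.mul_inv_rev, ← mul_assoc,
    PowerSeries.mul_inv_cancel _ (by simp), one_mul]

noncomputable def rhsTerm (m : ℕ) : ℚ⟦X⟧ :=
  (-1) ^ m * X ^ (m * (m + 1) / 2) * (negQPochhammer m)⁻¹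

theorem rhsTerm_two_mul_add_rhsTerm (n : ℕ) :
    rhsTerm (2 * n) + rhsTerm (2 * n + 1) =
      X ^ (n * (2 * n + 1)) * (negQPochhammer (2 * n + 1))⁻¹ := by
  have h_even : 2 * n * (2 * n + 1) / 2 = n * (2 * n + 1) := by
    rw [mul_assoc, Nat.mul_div_cancel_left _ two_pos]
  have h_odd : (2 * n + 1) * (2 * n + 1 + 1) / 2 = n * (2 * n + 1) + (2 * n + 1) := by
    rw [show (2 * n + 1) * (2 * n + 1 + 1) = 2 * (n * (2 * n + 1) + (2 * n + 1)) by ring,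
      Nat.mul_div_cancel_left _ two_pos]
  have h_sign : (-1 : ℚ⟦X⟧) ^ (2 * n) = 1 := (even_two_mul n).neg_one_pow
  rw [rhsTerm, rhsTerm, h_even, h_odd, inv_negQPochhammer_eq, pow_add, pow_succ (-1 : ℚ⟦X⟧), h_sign]
  ring

theorem coeff_rhsTerm_of_lt {N m : ℕ} (h : N < m) : coeff N (rhsTerm m) = 0 := by
  have h_order : m ≤ m * (m + 1) / 2 :=
    (Nat.le_div_iff_mul_le two_pos).mpr (Nat.mul_le_mul_left m (by omega))
  rw [rhsTerm, mul_comm ((-1) ^ m), mul_assoc]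
  exact coeff_X_pow_mul_of_lt (h.trans_le h_order) _

theorem coeff_lhsSeries (N : ℕ) :
    coeff N lhsSeries =
      coeff N (∑ n ∈ range (N + 2), X ^ (n * (2 * n + 1)) * (negQPochhammer (2 * n + 1))⁻¹) :=
  coeff_mk _ _

theorem coeff_rhsSeries (N : ℕ) :
    coeff N rhsSeries = coeff N (∑ m ∈ range (N + 2), rhsTerm m) :=
  coeff_mk _ _

/-- `Σ_{n≥0} q^{binom(2n+1,2)} / (−q;q)_{2n+1} = Σ_{n≥0} (−1)^n q^{binom(n+1,2)} / (−q;q)_n`. -/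
theorem stmt_6 : lhsSeries = rhsSeries := by
  ext N
  rw [coeff_lhsSeries, coeff_rhsSeries]
  simp_rw [← rhsTerm_two_mul_add_rhsTerm, ← sum_range_two_mul]
  exact coeff_sum_range_eq_of_coeff_eq_zero (by omega) fun m hm => coeff_rhsTerm_of_lt (by omega)
end

section
/- The coefficients of the formal power series (−q; q)_∞ · Σ_{n≥0} (−1)^n q^{n(n+1)/2} / (−q; q)_n are all nonnegative, and are strictly positive except for the coefficient of q^1, which is zero. -/
open PowerSeries Finset

/-- `(−q;q)_∞ = Π_{k ≥ 1} (1 + q^k)` as a formal power series over `ℚ`. -/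
noncomputable def prodDistinct : PowerSeries ℚ :=
  PowerSeries.mk fun n =>
    coeff n (∏ k ∈ Finset.range (n + 1), (1 + (X : PowerSeries ℚ) ^ (k + 1)))

/-- `Σ_{n ≥ 0} (−1)^n q^{n(n+1)/2} / (−q;q)_n` as a formal power series over `ℚ`. -/
noncomputable def falseTheta : PowerSeries ℚ :=
  PowerSeries.mk fun N =>
    coeff N (∑ n ∈ Finset.range (N + 2),
      ((-1 : PowerSeries ℚ)) ^ n * (X : PowerSeries ℚ) ^ (n * (n + 1) / 2) *
        (∏ k ∈ Finset.range n, (1 + (X : PowerSeries ℚ) ^ (k + 1)))⁻¹)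


/-!
Put `b_m = q^{m(m+1)/2} (−q;q)_∞ / (−q;q)_m = q^{m(m+1)/2} ∏_{k>m} (1 + q^k)`. Since
`m(m+1)/2 + (m+1) = (m+1)(m+2)/2`, consecutive terms telescope:
`b_m − b_{m+1} = q^{m(m+1)/2} ∏_{k>m+1} (1 + q^k)`. Pairing the terms of `∑ (−1)^m b_m` therefore
gives `∑_j q^{j(2j+1)} ∏_{k>2j+1} (1 + q^k)`, a sum of series with nonnegative coefficients.
Its `j = 0` term `∏_{k≥2} (1 + q^k)` counts partitions into distinct parts `≥ 2`, of which every
`n ≠ 1` has one (`∅` or `{n}`), while all terms with `j ≥ 1` are divisible by `q^3`.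
The infinite products are handled through finite truncations, which agree with them in low degrees.
-/

section DistinctProd

variable {R : Type*} [CommSemiring R]

noncomputable def distinctProd (s : Finset ℕ) : R⟦X⟧ := ∏ k ∈ s, (1 + X ^ k)

theorem coeff_distinctProd (s : Finset ℕ) (n : ℕ) :
    coeff n (distinctProd s : R⟦X⟧) = #{t ∈ s.powerset | ∑ k ∈ t, k = n} := by
  rw [distinctProd, prod_congr rfl fun k _ => add_comm 1 (X ^ k : R⟦X⟧), prod_add]
  simp only [prod_const_one, mul_one, map_sum, ← sum_boole]
  refine sum_congr rfl fun t _ => ?_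
  rw [prod_pow_eq_pow_sum t (fun i => i) X, coeff_X_pow]
  simp only [eq_comm]

theorem coeff_distinctProd_filter_le (s : Finset ℕ) (n : ℕ) :
    coeff n (distinctProd {k ∈ s | k ≤ n} : R⟦X⟧) = coeff n (distinctProd s) := by
  simp only [coeff_distinctProd]
  congr 2
  ext t
  simp only [mem_filter, mem_powerset, subset_iff]
  constructor
  · rintro ⟨h, hsum⟩
    exact ⟨fun k hk => (h hk).1, hsum⟩
  · rintro ⟨h, rfl⟩
    exact ⟨fun k hk => ⟨h hk, single_le_sum (f := id) (fun _ _ => Nat.zero_le _) hk⟩, rfl⟩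

theorem coeff_distinctProd_Ioc_zero {n N : ℕ} (h : n ≤ N) :
    coeff n (distinctProd (Ioc 0 N) : R⟦X⟧) = coeff n (distinctProd (Ioc 0 n)) := by
  rw [← coeff_distinctProd_filter_le, ← coeff_distinctProd_filter_le (Ioc 0 n)]
  congr 2
  ext k
  simp only [mem_filter, mem_Ioc]
  omega

theorem coeff_distinctProd_eq_zero_of_forall_lt {s : Finset ℕ} {n : ℕ} (hn : n ≠ 0)
    (h : ∀ k ∈ s, n < k) : coeff n (distinctProd s : R⟦X⟧) = 0 := by
  rw [← coeff_distinctProd_filter_le, filter_false_of_mem fun k hk => not_le.mpr (h k hk),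
    distinctProd, prod_empty, coeff_one, if_neg hn]

theorem distinctProd_Ioc_union {a b c : ℕ} (hab : a ≤ b) (hbc : b ≤ c) :
    (distinctProd (Ioc a c) : R⟦X⟧) = distinctProd (Ioc a b) * distinctProd (Ioc b c) := by
  rw [distinctProd, ← Ioc_union_Ioc_eq_Ioc hab hbc, prod_union (Ioc_disjoint_Ioc_of_le le_rfl)]
  rfl

theorem distinctProd_Ioc_of_lt {m N : ℕ} (h : m < N) :
    (distinctProd (Ioc m N) : R⟦X⟧) = (1 + X ^ (m + 1)) * distinctProd (Ioc (m + 1) N) := by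
  rw [distinctProd, ← insert_Ioc_succ_left_eq_Ioc h, prod_insert (by simp)]
  rfl

theorem constantCoeff_distinctProd {s : Finset ℕ} (h : 0 ∉ s) :
    constantCoeff (distinctProd s : R⟦X⟧) = 1 := by
  rw [distinctProd, map_prod]
  exact prod_eq_one fun k hk => by simp [zero_pow (ne_of_mem_of_not_mem hk h)]

variable [PartialOrder R] [IsOrderedRing R]

theorem coeff_X_pow_mul_distinctProd_nonneg (m : ℕ) (s : Finset ℕ) (n : ℕ) :
    0 ≤ coeff n (X ^ m * distinctProd s : R⟦X⟧) := by
  rw [coeff_X_pow_mul', coeff_distinctProd]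
  split_ifs <;> simp

theorem coeff_distinctProd_pos [Nontrivial R] {s : Finset ℕ} {n : ℕ} (h : n = 0 ∨ n ∈ s) :
    0 < coeff n (distinctProd s : R⟦X⟧) := by
  rw [coeff_distinctProd, Nat.cast_pos, card_pos]
  rcases h with rfl | h
  · exact ⟨∅, by simp⟩
  · exact ⟨{n}, by simp [h]⟩

end DistinctProd

theorem triangle_succ (m : ℕ) : (m + 1) * (m + 1 + 1) / 2 = m * (m + 1) / 2 + (m + 1) := by
  rw [show (m + 1) * (m + 1 + 1) = m * (m + 1) + (m + 1) * 2 by ring,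
    Nat.add_mul_div_right _ _ two_pos]

theorem le_triangle (m : ℕ) : m ≤ m * (m + 1) / 2 := by
  rw [Nat.le_div_iff_mul_le two_pos]
  rcases m with _ | m
  · rfl
  · exact Nat.mul_le_mul_left _ (by omega)

theorem sum_range_two_mul_neg_one_pow_mul {M : Type*} [CommRing M] (f : ℕ → M) (K : ℕ) :
    ∑ i ∈ range (2 * K), (-1) ^ i * f i = ∑ j ∈ range K, (f (2 * j) - f (2 * j + 1)) := by
  induction K with
  | zero => simp
  | succ K ih =>
    rw [show 2 * (K + 1) = 2 * K + 1 + 1 by ring, sum_range_succ, sum_range_succ, ih,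
      sum_range_succ, pow_succ, pow_mul]
    ring

section Telescoping

variable {R : Type*} [CommRing R]

theorem X_pow_triangle_mul_distinctProd_sub {m N : ℕ} (h : m < N) :
    X ^ (m * (m + 1) / 2) * distinctProd (Ioc m N) -
        X ^ ((m + 1) * (m + 1 + 1) / 2) * distinctProd (Ioc (m + 1) N) =
      (X ^ (m * (m + 1) / 2) * distinctProd (Ioc (m + 1) N) : R⟦X⟧) := by
  rw [distinctProd_Ioc_of_lt h, triangle_succ, pow_add]
  ring

theorem sum_neg_one_pow_mul_X_pow_triangle_mul_distinctProd {K N : ℕ} (h : 2 * K ≤ N + 1) :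
    ∑ i ∈ range (2 * K), (-1) ^ i * (X ^ (i * (i + 1) / 2) * distinctProd (Ioc i N)) =
      ∑ j ∈ range K,
        (X ^ (2 * j * (2 * j + 1) / 2) * distinctProd (Ioc (2 * j + 1) N) : R⟦X⟧) := by
  rw [sum_range_two_mul_neg_one_pow_mul]
  refine sum_congr rfl fun j hj => X_pow_triangle_mul_distinctProd_sub ?_
  rw [mem_range] at hj
  omega

end Telescoping

theorem prod_range_one_add_X_pow_succ {R : Type*} [CommSemiring R] (n : ℕ) :
    ∏ k ∈ range n, (1 + (X : R⟦X⟧) ^ (k + 1)) = distinctProd (Ioc 0 n) := by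
  induction n with
  | zero => rfl
  | succ n ih =>
    rw [prod_range_succ, ih, distinctProd, distinctProd, prod_Ioc_succ_top (Nat.zero_le n)]

noncomputable def falseThetaPartial (M : ℕ) : ℚ⟦X⟧ :=
  ∑ n ∈ range M, (-1) ^ n * X ^ (n * (n + 1) / 2) * (∏ k ∈ range n, (1 + X ^ (k + 1)))⁻¹

theorem coeff_falseThetaPartial_of_le {j M M' : ℕ} (hj : j < M) (hM : M ≤ M') :
    coeff j (falseThetaPartial M) = coeff j (falseThetaPartial M') := by
  rw [falseThetaPartial, falseThetaPartial, map_sum, map_sum]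
  refine sum_subset (range_subset_range.mpr hM) fun i _ hi => ?_
  rw [mem_range, not_lt] at hi
  rw [mul_right_comm, mul_comm, coeff_X_pow_mul',
    if_neg (not_le.mpr (hj.trans_le (hi.trans (le_triangle i))))]

theorem coeff_falseTheta {j M : ℕ} (hj : j < M) :
    coeff j falseTheta = coeff j (falseThetaPartial M) := by
  rw [falseTheta, coeff_mk]
  change coeff j (falseThetaPartial (j + 2)) = _
  rw [← coeff_falseThetaPartial_of_le (M := j + 1) (M' := j + 2) (by omega) (by omega)]
  exact coeff_falseThetaPartial_of_le (by omega) (by omega)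

theorem coeff_prodDistinct {i N : ℕ} (h : i ≤ N) :
    coeff i prodDistinct = coeff i (distinctProd (Ioc 0 N) : ℚ⟦X⟧) := by
  rw [prodDistinct, coeff_mk, prod_range_one_add_X_pow_succ, coeff_distinctProd_Ioc_zero h,
    coeff_distinctProd_Ioc_zero (by omega)]

theorem distinctProd_mul_falseThetaPartial (N : ℕ) :
    distinctProd (Ioc 0 N) * falseThetaPartial (N + 1) =
      ∑ i ∈ range (N + 1), (-1) ^ i * (X ^ (i * (i + 1) / 2) * distinctProd (Ioc i N)) := by
  rw [falseThetaPartial, mul_sum]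
  refine sum_congr rfl fun i hi => ?_
  rw [mem_range, Nat.lt_succ_iff] at hi
  have hinv : distinctProd (Ioc 0 i) * (distinctProd (Ioc 0 i))⁻¹ = (1 : ℚ⟦X⟧) :=
    PowerSeries.mul_inv_cancel _ (by simp [constantCoeff_distinctProd])
  rw [prod_range_one_add_X_pow_succ, distinctProd_Ioc_union (Nat.zero_le i) hi]
  linear_combination (-1) ^ i * X ^ (i * (i + 1) / 2) * distinctProd (Ioc i N) * hinv

theorem coeff_prodDistinct_mul_falseTheta (n : ℕ) :
    coeff n (prodDistinct * falseTheta) =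
      ∑ j ∈ range (n + 1),
        coeff n (X ^ (2 * j * (2 * j + 1) / 2) * distinctProd (Ioc (2 * j + 1) (2 * n + 1))) := by
  -- Truncating at `2n + 1` keeps all coefficients up to `q^n` and leaves an even number of terms.
  have htrunc : coeff n (prodDistinct * falseTheta) =
      coeff n (distinctProd (Ioc 0 (2 * n + 1)) * falseThetaPartial (2 * n + 1 + 1)) := by
    rw [coeff_mul, coeff_mul]
    refine sum_congr rfl fun p hp => ?_
    rw [HasAntidiagonal.mem_antidiagonal] at hp
    rw [coeff_prodDistinct (N := 2 * n + 1) (by omega),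
      coeff_falseTheta (M := 2 * n + 1 + 1) (by omega)]
  rw [htrunc, distinctProd_mul_falseThetaPartial, ← map_sum,
    show 2 * n + 1 + 1 = 2 * (n + 1) by ring,
    sum_neg_one_pow_mul_X_pow_triangle_mul_distinctProd (by omega)]

/-- The coefficients of `(−q;q)_∞ · Σ_{n≥0} (−1)^n q^{n(n+1)/2}/(−q;q)_n` are all
nonnegative, strictly positive except the coefficient of `q^1`, which vanishes. -/
theorem stmt_9 :
    (∀ n : ℕ, 0 ≤ coeff n (prodDistinct * falseTheta)) ∧
      (∀ n : ℕ, n ≠ 1 → 0 < coeff n (prodDistinct * falseTheta)) ∧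
      coeff 1 (prodDistinct * falseTheta) = 0 := by
  refine ⟨fun n => ?_, fun n hn => ?_, ?_⟩
  · rw [coeff_prodDistinct_mul_falseTheta]
    exact sum_nonneg fun j _ => coeff_X_pow_mul_distinctProd_nonneg _ _ _
  · rw [coeff_prodDistinct_mul_falseTheta, sum_range_succ']
    refine add_pos_of_nonneg_of_pos
      (sum_nonneg fun j _ => coeff_X_pow_mul_distinctProd_nonneg _ _ _) ?_
    rw [mul_zero, zero_mul, Nat.zero_div, pow_zero, one_mul]
    exact coeff_distinctProd_pos (by simp only [mem_Ioc]; omega)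
  · rw [coeff_prodDistinct_mul_falseTheta, sum_range_succ, sum_range_one]
    show coeff 1 (X ^ 0 * distinctProd (Ioc 1 3)) + coeff 1 (X ^ 3 * distinctProd (Ioc 3 3)) = 0
    rw [pow_zero, one_mul, coeff_X_pow_mul', if_neg (by norm_num), add_zero]
    exact coeff_distinctProd_eq_zero_of_forall_lt one_ne_zero fun k hk => (mem_Ioc.mp hk).1
end

section
/- As formal power series in q, the generating function for σ_d moex(n), the sum over all distinct-parts partitions π of n of the smallest odd positive integer missing from π, satisfies Σ_{n≥0} σ_d moex(n) q^n = (−q; q)_∞ · (1 + 2 Σ_{n≥1} q^{n^2} / (−q; q^2)_n). -/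
open PowerSeries Finset

/-- The minimal odd excludant: the least odd positive integer not occurring as a part. -/
noncomputable def pmoex (S : Finset ℕ) : ℕ := sInf {m : ℕ | Odd m ∧ m ∉ S}

/-- The sum of minimal odd excludants over all distinct-parts partitions of `n`. -/
noncomputable def sigmadmoex (n : ℕ) : ℕ := ∑ S ∈ Dpart n, pmoex S

/-- `Σ_{n ≥ 1} q^{n²} / (−q;q²)_n` as a formal power series over `ℚ`
(the term of index `n` has order `n² ≥ n`). -/
noncomputable def sigmaStarSum : PowerSeries ℚ :=
  PowerSeries.mk fun N =>
    coeff N (∑ n ∈ Finset.Icc 1 (N + 1),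
      (X : PowerSeries ℚ) ^ (n ^ 2) *
        (∏ k ∈ Finset.range n, (1 + (X : PowerSeries ℚ) ^ (2 * k + 1)))⁻¹)

/-!
Write `pmoex π = 2ν + 1`. Then `1, 3, …, 2ν - 1` are parts of `π`, so `pmoex π` is `1` plus twice
the number of `n ≥ 1` such that `π` contains the first `n` odd numbers. Summing over `π ∈ D(N)`
and exchanging the sums, `σ_d moex(N)` is `|D(N)|` plus twice the number of pairs `(n, π)` with
`π ⊇ {1, 3, …, 2n - 1}`. Removing a fixed set `A` of positive parts from the partitions that
contain it shows that they are generated by `(−q;q)_∞ q^{ΣA} / ∏_{a ∈ A} (1 + q^a)`; for the first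
`n` odd numbers `ΣA = n²` and the product is `(−q;q²)_n`.
-/

section SubsetSums

variable {R : Type*} [CommSemiring R]

theorem prod_one_add_X_pow (s : Finset ℕ) :
    ∏ m ∈ s, (1 + X ^ m : R⟦X⟧) = ∑ T ∈ s.powerset, X ^ T.sum id := by
  rw [prod_one_add]
  exact sum_congr rfl fun T _ => prod_pow_eq_pow_sum T id X

theorem coeff_X_pow_mul_prod_one_add_X_pow (k N : ℕ) (s : Finset ℕ) :
    coeff N (X ^ k * ∏ m ∈ s, (1 + X ^ m) : R⟦X⟧) = #{T ∈ s.powerset | k + T.sum id = N} := by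
  rw [prod_one_add_X_pow, mul_sum, map_sum, natCast_card_filter]
  simp only [← pow_add, coeff_X_pow, eq_comm]

theorem constantCoeff_prod_one_add_X_pow {s : Finset ℕ} (hs : 0 ∉ s) :
    constantCoeff (∏ m ∈ s, (1 + X ^ m) : R⟦X⟧) = 1 := by
  rw [map_prod]
  refine prod_eq_one fun m hm => ?_
  simp [zero_pow (ne_of_mem_of_not_mem hm hs)]

end SubsetSums

theorem coeff_mul_congr_right {R : Type*} [Semiring R] {f g g' : R⟦X⟧} {N : ℕ}
    (h : ∀ j ≤ N, coeff j g = coeff j g') : coeff N (f * g) = coeff N (f * g') := by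
  simp only [coeff_mul]
  exact sum_congr rfl fun p hp => by rw [h p.2 (by have := mem_antidiagonal.1 hp; omega)]

theorem card_filter_powerset_sum_eq_superset {α M : Type*} [DecidableEq α] [AddCommMonoid M]
    [DecidableEq M] (f : α → M) {A U : Finset α} (hAU : A ⊆ U) (c : M) :
    #{S ∈ U.powerset | S.sum f = c ∧ A ⊆ S} = #{T ∈ (U \ A).powerset | A.sum f + T.sum f = c} := by
  refine card_bij' (fun S _ => S \ A) (fun T _ => A ∪ T) ?_ ?_ ?_ ?_
  · intro S hS
    simp only [mem_filter, mem_powerset] at hS ⊢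
    exact ⟨sdiff_subset_sdiff hS.1 le_rfl, by rw [add_comm, sum_sdiff hS.2.2, hS.2.1]⟩
  · intro T hT
    simp only [mem_filter, mem_powerset] at hT ⊢
    have hdisj : Disjoint A T := disjoint_of_subset_right hT.1 disjoint_sdiff
    exact ⟨union_subset hAU (hT.1.trans sdiff_subset), by rw [sum_union hdisj, hT.2],
      subset_union_left⟩
  · intro S hS
    exact union_sdiff_of_subset (mem_filter.1 hS).2.2
  · intro T hT
    exact union_sdiff_cancel_left
      (disjoint_of_subset_right (mem_powerset.1 (mem_filter.1 hT).1) disjoint_sdiff)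

theorem Dpart_eq_filter_powerset {n M : ℕ} (h : n ≤ M) :
    Dpart n = {S ∈ (Icc 1 M).powerset | S.sum id = n} := by
  ext S
  simp only [Dpart, mem_filter, mem_powerset, and_congr_left_iff]
  intro hS
  refine ⟨fun hsub => hsub.trans (Icc_subset_Icc_right h), fun hsub m hm => ?_⟩
  have hle : m ≤ n := hS ▸ single_le_sum (f := id) (fun _ _ => Nat.zero_le _) hm
  exact mem_Icc.2 ⟨(mem_Icc.1 (hsub hm)).1, hle⟩

theorem coeff_prod_Icc_one_add_X_pow {n M : ℕ} (h : n ≤ M) :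
    coeff n (∏ m ∈ Icc 1 M, (1 + X ^ m) : ℚ⟦X⟧) = #(Dpart n) := by
  simpa [Dpart_eq_filter_powerset h] using coeff_X_pow_mul_prod_one_add_X_pow 0 n (Icc 1 M)

theorem coeff_prodDistinct_s10 (n : ℕ) : coeff n prodDistinct = #(Dpart n) := by
  rw [prodDistinct, coeff_mk, ← coeff_prod_Icc_one_add_X_pow (M := n + 1) (by omega),
    ← Ico_add_one_right_eq_Icc, ← prod_Ico_add' _ 0 (n + 1) 1, ← range_eq_Ico]

theorem coeff_prodDistinct_mul {N M : ℕ} (h : N ≤ M) (F : ℚ⟦X⟧) :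
    coeff N (prodDistinct * F) = coeff N ((∏ m ∈ Icc 1 M, (1 + X ^ m)) * F) := by
  rw [mul_comm, mul_comm _ F]
  exact coeff_mul_congr_right fun j hj => by
    rw [coeff_prodDistinct_s10, coeff_prod_Icc_one_add_X_pow (hj.trans h)]

theorem coeff_prodDistinct_mul_X_pow_sum_mul_inv {A : Finset ℕ} (hA : 0 ∉ A) (N : ℕ) :
    coeff N (prodDistinct * (X ^ A.sum id * (∏ a ∈ A, (1 + X ^ a))⁻¹)) =
      (#{π ∈ Dpart N | A ⊆ π} : ℚ) := by
  set M := N + A.sum id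
  have hAM : A ⊆ Icc 1 M := fun a ha => mem_Icc.2
    ⟨Nat.one_le_iff_ne_zero.2 (ne_of_mem_of_not_mem ha hA),
      (single_le_sum (f := id) (fun _ _ => Nat.zero_le _) ha).trans (Nat.le_add_left _ _)⟩
  have hinv : (∏ a ∈ A, (1 + X ^ a) : ℚ⟦X⟧) * (∏ a ∈ A, (1 + X ^ a))⁻¹ = 1 :=
    PowerSeries.mul_inv_cancel _ (by simp [constantCoeff_prod_one_add_X_pow hA])
  calc coeff N (prodDistinct * (X ^ A.sum id * (∏ a ∈ A, (1 + X ^ a))⁻¹))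
      = coeff N ((∏ m ∈ Icc 1 M, (1 + X ^ m)) * (X ^ A.sum id * (∏ a ∈ A, (1 + X ^ a))⁻¹)) :=
        coeff_prodDistinct_mul (Nat.le_add_right _ _) _
    _ = coeff N (X ^ A.sum id * ∏ m ∈ Icc 1 M \ A, (1 + X ^ m)) := by
        rw [← prod_sdiff hAM]
        congr 1
        linear_combination (X ^ A.sum id * ∏ m ∈ Icc 1 M \ A, (1 + X ^ m) : ℚ⟦X⟧) * hinv
    _ = #{T ∈ (Icc 1 M \ A).powerset | A.sum id + T.sum id = N} :=
        coeff_X_pow_mul_prod_one_add_X_pow _ _ _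
    _ = #{π ∈ Dpart N | A ⊆ π} := by
        rw [Dpart_eq_filter_powerset (Nat.le_add_right _ _), filter_filter,
          card_filter_powerset_sum_eq_superset id hAM]

def firstOdds (n : ℕ) : Finset ℕ := (range n).image (2 * · + 1)

theorem mem_firstOdds {n m : ℕ} : m ∈ firstOdds n ↔ Odd m ∧ m < 2 * n := by
  simp only [firstOdds, mem_image, mem_range, Odd]
  constructor
  · rintro ⟨k, hk, rfl⟩
    exact ⟨⟨k, rfl⟩, by omega⟩
  · rintro ⟨⟨k, rfl⟩, hk⟩
    exact ⟨k, by omega, rfl⟩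

theorem zero_notMem_firstOdds (n : ℕ) : 0 ∉ firstOdds n := fun h =>
  Nat.not_odd_zero (mem_firstOdds.1 h).1

@[to_additive]
theorem prod_firstOdds {M : Type*} [CommMonoid M] (n : ℕ) (f : ℕ → M) :
    ∏ m ∈ firstOdds n, f m = ∏ k ∈ range n, f (2 * k + 1) :=
  prod_image fun _ _ _ _ h => by omega

theorem sum_id_firstOdds (n : ℕ) : (firstOdds n).sum id = n ^ 2 := by
  rw [sum_firstOdds]
  induction n with
  | zero => rfl
  | succ n ih => rw [sum_range_succ, ih]; simp only [id]; ring

theorem pmoex_spec (S : Finset ℕ) : Odd (pmoex S) ∧ pmoex S ∉ S :=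
  Nat.sInf_mem (s := {m | Odd m ∧ m ∉ S}) ⟨2 * S.sup id + 1, odd_two_mul_add_one _, fun h => by
    have : id (2 * S.sup id + 1) ≤ S.sup id := le_sup h
    simp only [id] at this
    omega⟩

theorem firstOdds_subset_iff (S : Finset ℕ) (n : ℕ) : firstOdds n ⊆ S ↔ 2 * n < pmoex S := by
  obtain ⟨hodd, hnotMem⟩ := pmoex_spec S
  constructor
  · intro hsub
    by_contra! hle
    have hlt : pmoex S < 2 * n := lt_of_le_of_ne hle fun h => by
      rw [h] at hodd; exact Nat.not_even_iff_odd.2 hodd (even_two_mul n)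
    exact hnotMem (hsub (mem_firstOdds.2 ⟨hodd, hlt⟩))
  · intro hlt m hm
    obtain ⟨hm_odd, hm_lt⟩ := mem_firstOdds.1 hm
    by_contra hmS
    have : pmoex S ≤ m := Nat.sInf_le ⟨hm_odd, hmS⟩
    omega

theorem pmoex_eq_one_add_two_mul_card (S : Finset ℕ) {M : ℕ} (h : pmoex S ≤ 2 * M + 1) :
    pmoex S = 1 + 2 * #{n ∈ Icc 1 M | firstOdds n ⊆ S} := by
  obtain ⟨ν, hν⟩ := (pmoex_spec S).1
  have : {n ∈ Icc 1 M | firstOdds n ⊆ S} = Icc 1 ν := by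
    ext n
    simp only [mem_filter, mem_Icc, firstOdds_subset_iff]
    omega
  rw [this, Nat.card_Icc]
  omega

theorem pmoex_le_of_mem_Dpart {N : ℕ} {S : Finset ℕ} (hS : S ∈ Dpart N) :
    pmoex S ≤ 2 * N + 1 :=
  Nat.sInf_le ⟨odd_two_mul_add_one N, fun h => by
    have := mem_Icc.1 (mem_powerset.1 (mem_filter.1 hS).1 h)
    omega⟩

theorem sigmadmoex_eq (N : ℕ) :
    sigmadmoex N = #(Dpart N) + 2 * ∑ n ∈ Icc 1 (N + 1), #{π ∈ Dpart N | firstOdds n ⊆ π} := by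
  rw [sigmadmoex, sum_congr rfl fun π hπ => pmoex_eq_one_add_two_mul_card π
    ((pmoex_le_of_mem_Dpart hπ).trans (by omega : 2 * N + 1 ≤ 2 * (N + 1) + 1))]
  simp only [sum_add_distrib, ← mul_sum, card_eq_sum_ones, sum_filter]
  rw [sum_comm]

theorem coeff_mul_sigmaStarSum (f : ℚ⟦X⟧) (N : ℕ) :
    coeff N (f * sigmaStarSum) = ∑ n ∈ Icc 1 (N + 1),
      coeff N (f * (X ^ (n ^ 2) * (∏ k ∈ range n, (1 + X ^ (2 * k + 1)))⁻¹)) := by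
  rw [← map_sum, ← mul_sum]
  refine coeff_mul_congr_right fun j hj => ?_
  rw [sigmaStarSum, coeff_mk, map_sum, map_sum]
  refine sum_subset (Icc_subset_Icc_right (by omega)) fun n hn hnN => ?_
  have hjn : j < n ^ 2 := by
    simp only [mem_Icc] at hn hnN
    have := Nat.le_self_pow two_ne_zero n
    omega
  rw [coeff_X_pow_mul', if_neg (by omega)]

/-- `Σ_{n≥0} σ_d moex(n) q^n = (−q;q)_∞ · (1 + 2 Σ_{n≥1} q^{n²}/(−q;q²)_n)`. -/
theorem stmt_10 :
    (PowerSeries.mk fun n => (sigmadmoex n : ℚ)) =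
      prodDistinct * (1 + 2 * sigmaStarSum) := by
  ext N
  have hterm (n : ℕ) : coeff N (prodDistinct * ((X : ℚ⟦X⟧) ^ (n ^ 2) *
      (∏ k ∈ range n, (1 + X ^ (2 * k + 1)))⁻¹)) = (#{π ∈ Dpart N | firstOdds n ⊆ π} : ℚ) := by
    rw [← sum_id_firstOdds, ← prod_firstOdds n (fun m => 1 + X ^ m)]
    exact coeff_prodDistinct_mul_X_pow_sum_mul_inv (zero_notMem_firstOdds n) N
  rw [coeff_mk, sigmadmoex_eq, mul_add, mul_one, mul_left_comm, map_add, coeff_prodDistinct_s10,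
    ← map_ofNat C 2, coeff_C_mul, coeff_mul_sigmaStarSum, sum_congr rfl fun n _ => hterm n]
  push_cast
  rfl
end

section
/- As formal power series in q, Σ_{n≥1} q^{n^2} / (−q; q^2)_n = Σ_{n≥1} (−1)^{n−1} q^n (q^2; q^2)_{n−1}. -/
open PowerSeries Finset

/-- `Σ_{n ≥ 1} (−1)^{n−1} q^n (q²;q²)_{n−1}` as a formal power series over `ℚ`
(the term of index `n` has order `n`). -/
noncomputable def altSum : PowerSeries ℚ :=
  PowerSeries.mk fun N =>
    coeff N (∑ n ∈ Finset.Icc 1 (N + 1),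
      ((-1 : PowerSeries ℚ)) ^ (n - 1) * (X : PowerSeries ℚ) ^ n *
        (∏ k ∈ Finset.Icc 1 (n - 1), (1 - (X : PowerSeries ℚ) ^ (2 * k))))

/-! Both sides are the `k = 0` members of hierarchies
`F k = Σ_{n ≥ 0} q^{(n+1)² + 2kn} / (-q^{2k+1}; q²)_{n+1}` and
`G k = Σ_{n ≥ 0} (-1)^n q^{(2k+1)n + 1} (q²; q²)_n`
satisfying the same recursion `(1 + q^{2k+1}) H k = q + q^{2k+3} H (k+1)`.
The difference `D k = F k - G k` then satisfies `(1 + q^{2k+1}) D k = q^{2k+3} D (k+1)`,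
so every `D k` is divisible by every power of `q`, i.e. `D = 0`. -/

open scoped PowerSeries.WithPiTopology

namespace PowerSeries

theorem isUnit_one_add_X_pow {R : Type*} [Ring R] (m : ℕ) :
    IsUnit (1 + X ^ (m + 1) : R⟦X⟧) := by
  simp [isUnit_iff_constantCoeff]

theorem eq_zero_of_forall_X_mul_dvd {R : Type*} [CommSemiring R] {D : ℕ → R⟦X⟧}
    (h : ∀ k, X * D (k + 1) ∣ D k) (k : ℕ) : D k = 0 := by
  have hpow : ∀ i k, (X : R⟦X⟧) ^ i ∣ D k := by
    intro i
    induction i with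
    | zero => simp
    | succ i ih =>
      intro k
      rw [pow_succ']
      exact (mul_dvd_mul_left X (ih (k + 1))).trans (h k)
  ext n
  exact X_pow_dvd_iff.mp (hpow (n + 1) k) n n.lt_succ_self

theorem eq_of_mul_eq_add_X_mul {R : Type*} [CommRing R] {u v w F G : ℕ → R⟦X⟧}
    (hu : ∀ k, IsUnit (u k)) (hF : ∀ k, u k * F k = v k + X * w k * F (k + 1))
    (hG : ∀ k, u k * G k = v k + X * w k * G (k + 1)) : F = G := by
  funext k
  rw [← sub_eq_zero]
  refine eq_zero_of_forall_X_mul_dvd (D := F - G) (fun k => ?_) k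
  refine (hu k).dvd_mul_left.mp ⟨w k, ?_⟩
  simp only [Pi.sub_apply, mul_sub, hF, hG]
  ring

namespace WithPiTopology

theorem hasSum_of_X_pow_dvd {R : Type*} [Semiring R] [TopologicalSpace R] {f : ℕ → R⟦X⟧}
    (h : ∀ n, X ^ n ∣ f n) : HasSum f (mk fun N => coeff N (∑ n ∈ range (N + 1), f n)) := by
  rw [hasSum_iff_hasSum_coeff]
  intro N
  rw [coeff_mk, map_sum]
  refine hasSum_sum_of_ne_finset_zero fun n hn => X_pow_dvd_iff.mp (h n) N ?_
  simpa using hn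

end WithPiTopology

end PowerSeries

-- The `n`-th terms of the series `F k` and `G k`.
noncomputable def sigmaTerm (k n : ℕ) : ℚ⟦X⟧ :=
  X ^ ((n + 1) ^ 2 + 2 * k * n) * (∏ j ∈ range (n + 1), (1 + X ^ (2 * (k + j) + 1)))⁻¹

noncomputable def altTerm (k n : ℕ) : ℚ⟦X⟧ :=
  (-1) ^ n * X ^ ((2 * k + 1) * n + 1) * ∏ j ∈ Icc 1 n, (1 - X ^ (2 * j))

theorem X_pow_dvd_sigmaTerm (k n : ℕ) : X ^ n ∣ sigmaTerm k n :=
  (pow_dvd_pow X (by nlinarith)).mul_right _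

theorem X_pow_dvd_altTerm (k n : ℕ) : X ^ n ∣ altTerm k n :=
  ((pow_dvd_pow X (by nlinarith)).mul_left _).mul_right _

theorem summable_sigmaTerm (k : ℕ) : Summable (sigmaTerm k) :=
  (WithPiTopology.hasSum_of_X_pow_dvd (X_pow_dvd_sigmaTerm k)).summable

theorem summable_altTerm (k : ℕ) : Summable (altTerm k) :=
  (WithPiTopology.hasSum_of_X_pow_dvd (X_pow_dvd_altTerm k)).summable

theorem one_add_X_pow_mul_sigmaTerm_zero (k : ℕ) :
    (1 + X ^ (2 * k + 1)) * sigmaTerm k 0 = X := by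
  simp only [sigmaTerm, zero_add, range_one, prod_singleton, mul_zero, add_zero, one_pow, pow_one]
  rw [mul_left_comm, PowerSeries.mul_inv_cancel _ (by simp), mul_one]

theorem one_add_X_pow_mul_sigmaTerm_succ (k n : ℕ) :
    (1 + X ^ (2 * k + 1)) * sigmaTerm k (n + 1) = X ^ (2 * k + 3) * sigmaTerm (k + 1) n := by
  have hprod : ∏ j ∈ range (n + 1 + 1), (1 + X ^ (2 * (k + j) + 1) : ℚ⟦X⟧) =
      (∏ j ∈ range (n + 1), (1 + X ^ (2 * (k + 1 + j) + 1))) * (1 + X ^ (2 * k + 1)) := by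
    rw [prod_range_succ']
    congr 1
    refine prod_congr rfl fun j _ => ?_
    ring_nf
  have hexp : (n + 1 + 1) ^ 2 + 2 * k * (n + 1) = 2 * k + 3 + ((n + 1) ^ 2 + 2 * (k + 1) * n) := by
    ring
  rw [sigmaTerm, sigmaTerm, hprod, PowerSeries.mul_inv_rev, hexp, pow_add, mul_left_comm,
    ← mul_assoc _ _⁻¹, PowerSeries.mul_inv_cancel _ (by simp)]
  ring

theorem altTerm_zero (k : ℕ) : altTerm k 0 = X := by
  simp [altTerm]

theorem altTerm_succ_add (k n : ℕ) :
    altTerm k (n + 1) + X ^ (2 * k + 1) * altTerm k n = X ^ (2 * k + 3) * altTerm (k + 1) n := by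
  rw [altTerm, altTerm, altTerm, prod_Icc_succ_top (by omega), pow_succ (-1 : ℚ⟦X⟧) n]
  ring

theorem one_add_X_pow_mul_tsum_sigmaTerm (k : ℕ) :
    (1 + X ^ (2 * k + 1)) * ∑' n, sigmaTerm k n =
      X + X ^ (2 * k + 3) * ∑' n, sigmaTerm (k + 1) n := by
  have hs := summable_sigmaTerm k
  rw [← hs.tsum_mul_left, (hs.mul_left _).tsum_eq_zero_add,
    ← (summable_sigmaTerm (k + 1)).tsum_mul_left]
  simp only [one_add_X_pow_mul_sigmaTerm_zero, one_add_X_pow_mul_sigmaTerm_succ]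

theorem one_add_X_pow_mul_tsum_altTerm (k : ℕ) :
    (1 + X ^ (2 * k + 1)) * ∑' n, altTerm k n =
      X + X ^ (2 * k + 3) * ∑' n, altTerm (k + 1) n := by
  have hs := summable_altTerm k
  rw [add_mul, one_mul, ← hs.tsum_mul_left, hs.tsum_eq_zero_add, altTerm_zero, add_assoc,
    ← ((summable_nat_add_iff 1).mpr hs).tsum_add (hs.mul_left _),
    ← (summable_altTerm (k + 1)).tsum_mul_left]
  simp only [altTerm_succ_add]

theorem sum_Icc_one_eq_sum_range {M : Type*} [AddCommMonoid M] (f : ℕ → M) (N : ℕ) :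
    ∑ n ∈ Icc 1 N, f n = ∑ n ∈ range N, f (n + 1) := by
  rw [← Ico_add_one_right_eq_Icc, sum_Ico_eq_sum_range]
  simp [add_comm]

theorem sigmaStarSum_eq_tsum : sigmaStarSum = ∑' n, sigmaTerm 0 n := by
  rw [(WithPiTopology.hasSum_of_X_pow_dvd (X_pow_dvd_sigmaTerm 0)).tsum_eq]
  simp [sigmaStarSum, sum_Icc_one_eq_sum_range, sigmaTerm]

theorem altSum_eq_tsum : altSum = ∑' n, altTerm 0 n := by
  rw [(WithPiTopology.hasSum_of_X_pow_dvd (X_pow_dvd_altTerm 0)).tsum_eq]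
  simp [altSum, sum_Icc_one_eq_sum_range, altTerm]

/-- `Σ_{n≥1} q^{n²}/(−q;q²)_n = Σ_{n≥1} (−1)^{n−1} q^n (q²;q²)_{n−1}`. -/
theorem stmt_11 : sigmaStarSum = altSum := by
  have hrec : (fun k => ∑' n, sigmaTerm k n) = fun k => ∑' n, altTerm k n := by
    refine eq_of_mul_eq_add_X_mul (u := fun k => 1 + X ^ (2 * k + 1)) (v := fun _ => X)
      (w := fun k => X ^ (2 * k + 2)) (fun k => isUnit_one_add_X_pow (2 * k)) (fun k => ?_)
      (fun k => ?_)
    · rw [one_add_X_pow_mul_tsum_sigmaTerm, ← pow_succ']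
    · rw [one_add_X_pow_mul_tsum_altTerm, ← pow_succ']
  rw [sigmaStarSum_eq_tsum, altSum_eq_tsum]
  exact congrFun hrec 0
end

section
/- As formal power series in q, the generating function for σ_d maex(n), the sum of maximal excludants over distinct-parts partitions of n, satisfies Σ_{n≥0} σ_d maex(n) q^n = Σ_{k≥1} k · (−q; q)_{k−1} · Σ_{m≥1} q^{m(m+1)/2 + km}. -/
/-!
A partition into distinct parts with maximal excludant `k ≥ 1` is uniquely of the form
`T ∪ {k+1, …, k+m}` with `T ⊆ {1, …, k-1}` and `m ≥ 1`: above the maximal excludant every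
number up to the largest part occurs. Its size is `∑ T + m(m+1)/2 + km`, and partitions with
maximal excludant `0` contribute nothing. Summing `k` over all such triples `(k, T, m)`, the
sum over `T` produces `(−q;q)_{k−1}` and the sum over `m` the inner series.
-/

open PowerSeries Finset

/-- The maximal excludant: the largest nonnegative integer smaller than the largest
part that does not occur as a part (`0` for the empty partition). -/
noncomputable def pmaex (S : Finset ℕ) : ℕ := sSup {m : ℕ | m < S.sup id ∧ m ∉ S}

/-- The sum of maximal excludants over all distinct-parts partitions of `n`. -/
noncomputable def sigmadmaex (n : ℕ) : ℕ := ∑ S ∈ Dpart n, pmaex S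

/-- `Σ_{k ≥ 1} k (−q;q)_{k−1} Σ_{m ≥ 1} q^{m(m+1)/2 + km}` as a formal power series
over `ℚ` (the term of indices `k, m` has order `m(m+1)/2 + km ≥ k + m`). -/
noncomputable def maexSeries : PowerSeries ℚ :=
  PowerSeries.mk fun N =>
    coeff N (∑ k ∈ Finset.Icc 1 (N + 1), (k : PowerSeries ℚ) *
      (∏ j ∈ Finset.range (k - 1), (1 + (X : PowerSeries ℚ) ^ (j + 1))) *
      ∑ m ∈ Finset.Icc 1 (N + 1), (X : PowerSeries ℚ) ^ (m * (m + 1) / 2 + k * m))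

theorem sum_Icc_add_one_add (k m : ℕ) :
    ∑ i ∈ Icc (k + 1) (k + m), i = m * (m + 1) / 2 + k * m := by
  induction m with
  | zero => simp
  | succ m ih =>
    rw [← add_assoc, sum_Icc_succ_top (by omega), ih, mul_add_one k m]
    have := (Nat.even_mul_succ_self m).two_dvd
    have : (m + 1) * (m + 1 + 1) = m * (m + 1) + 2 * (m + 1) := by ring
    omega

theorem prod_range_one_add_X_pow {R : Type*} [CommSemiring R] (n : ℕ) :
    ∏ j ∈ range n, (1 + (X : R⟦X⟧) ^ (j + 1)) =
      ∑ T ∈ (Icc 1 n).powerset, X ^ T.sum id := by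
  rw [← Nat.Ico_zero_eq_range, prod_Ico_add' (fun j => 1 + (X : R⟦X⟧) ^ j),
    zero_add, Ico_add_one_right_eq_Icc, prod_one_add]
  exact sum_congr rfl fun T _ => prod_pow_eq_pow_sum T id X

theorem pmaex_eq_of_forall {S : Finset ℕ} {k : ℕ} (hkS : k ∉ S) (hk : k < S.sup id)
    (h : ∀ j, k < j → j < S.sup id → j ∈ S) : pmaex S = k :=
  IsGreatest.csSup_eq ⟨⟨hk, hkS⟩, fun j hj => not_lt.1 fun hkj => hj.2 (h j hkj hj.1)⟩

theorem pmaex_spec {S : Finset ℕ} (h : pmaex S ≠ 0) :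
    pmaex S < S.sup id ∧ pmaex S ∉ S ∧ ∀ j, pmaex S < j → j < S.sup id → j ∈ S := by
  have hbdd : BddAbove {m : ℕ | m < S.sup id ∧ m ∉ S} := ⟨S.sup id, fun _ hm => hm.1.le⟩
  have hne : {m : ℕ | m < S.sup id ∧ m ∉ S}.Nonempty :=
    Set.nonempty_iff_ne_empty.2 fun he => h (by rw [pmaex, he, csSup_empty, bot_eq_zero])
  obtain ⟨hlt, hnot⟩ := Nat.sSup_mem hne hbdd
  exact ⟨hlt, hnot, fun j hj hjS =>
    by_contra fun hj' => (le_csSup hbdd ⟨hjS, hj'⟩).not_gt hj⟩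

section UnionIcc

variable {k m : ℕ} {T : Finset ℕ}

theorem disjoint_Icc_add_one (hT : T ⊆ Icc 1 (k - 1)) : Disjoint T (Icc (k + 1) (k + m)) :=
  disjoint_left.2 fun a ha ha' => by
    have := mem_Icc.1 (hT ha); have := mem_Icc.1 ha'; omega

theorem sup_union_Icc (hT : T ⊆ Icc 1 (k - 1)) (hm : m ≠ 0) :
    (T ∪ Icc (k + 1) (k + m)).sup id = k + m := by
  refine le_antisymm (Finset.sup_le fun a ha => ?_) (le_sup (f := id) (by simp; omega))
  rcases mem_union.1 ha with ha | ha
  · have := mem_Icc.1 (hT ha); simp only [id]; omega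
  · exact (mem_Icc.1 ha).2

theorem pmaex_union_Icc (hT : T ⊆ Icc 1 (k - 1)) (hm : m ≠ 0) :
    pmaex (T ∪ Icc (k + 1) (k + m)) = k := by
  refine pmaex_eq_of_forall ?_ (by rw [sup_union_Icc hT hm]; omega) fun j hkj hj => ?_
  · rw [mem_union, mem_Icc, not_or]
    exact ⟨fun hk => by have := mem_Icc.1 (hT hk); omega, by omega⟩
  · rw [sup_union_Icc hT hm] at hj
    exact mem_union_right _ (mem_Icc.2 ⟨hkj, hj.le⟩)

theorem sum_union_Icc (hT : T ⊆ Icc 1 (k - 1)) :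
    (T ∪ Icc (k + 1) (k + m)).sum id = T.sum id + (m * (m + 1) / 2 + k * m) := by
  rw [sum_union (disjoint_Icc_add_one hT), ← sum_Icc_add_one_add]
  rfl

theorem union_Icc_inter_Icc (hT : T ⊆ Icc 1 (k - 1)) :
    (T ∪ Icc (k + 1) (k + m)) ∩ Icc 1 (k - 1) = T := by
  rw [union_inter_distrib_right, inter_eq_left.2 hT, union_eq_left]
  intro a ha
  simp only [mem_inter, mem_Icc] at ha
  omega

end UnionIcc

theorem eq_inter_union_Icc_of_pmaex_ne_zero {S : Finset ℕ} (h0 : 0 ∉ S) (h : pmaex S ≠ 0) :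
    S = (S ∩ Icc 1 (pmaex S - 1)) ∪ Icc (pmaex S + 1) (S.sup id) := by
  obtain ⟨hlt, hnot, hgap⟩ := pmaex_spec h
  have hsup : S.sup id ∈ S := by
    obtain ⟨i, hi, hsup⟩ := exists_mem_eq_sup S (nonempty_iff_ne_empty.2 fun he => by
      simp [he] at hlt) id
    rwa [hsup]
  ext a
  simp only [mem_union, mem_inter, mem_Icc]
  constructor
  · intro ha
    have hle : a ≤ S.sup id := le_sup (f := id) ha
    have : a ≠ 0 := fun h => h0 (h ▸ ha)
    rcases (show a ≠ pmaex S from fun h => hnot (h ▸ ha)).lt_or_gt with hak | hak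
    exacts [Or.inl ⟨ha, by omega, by omega⟩, Or.inr ⟨hak, hle⟩]
  · rintro (⟨ha, -⟩ | ⟨hka, haL⟩)
    · exact ha
    · rcases haL.lt_or_eq with haL | rfl
      exacts [hgap a hka haL, hsup]

/-- `(k, T, m)` encodes the partition `T ∪ {k+1, …, k+m}` of `N`, whose maximal excludant
is `k`; the bounds `k, m ≤ N + 1` are those of the truncated sums in `maexSeries`. -/
def maexTriples (N : ℕ) : Finset (ℕ × Finset ℕ × ℕ) :=
  (Icc 1 (N + 1) ×ˢ (Icc 1 N).powerset ×ˢ Icc 1 (N + 1)).filter fun p =>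
    p.2.1 ⊆ Icc 1 (p.1 - 1) ∧ p.2.1.sum id + (p.2.2 * (p.2.2 + 1) / 2 + p.1 * p.2.2) = N

theorem mem_Dpart {n : ℕ} {S : Finset ℕ} : S ∈ Dpart n ↔ S ⊆ Icc 1 n ∧ S.sum id = n :=
  mem_filter.trans (and_congr_left' mem_powerset)

theorem mem_maexTriples {N k m : ℕ} {T : Finset ℕ} :
    (k, T, m) ∈ maexTriples N ↔
      (k ∈ Icc 1 (N + 1) ∧ T ⊆ Icc 1 N ∧ m ∈ Icc 1 (N + 1)) ∧
        T ⊆ Icc 1 (k - 1) ∧ T.sum id + (m * (m + 1) / 2 + k * m) = N := by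
  simp [maexTriples]

theorem mem_maexTriples_of_mem_Dpart {N : ℕ} {S : Finset ℕ} (hS : S ∈ Dpart N)
    (h : pmaex S ≠ 0) :
    (pmaex S, S ∩ Icc 1 (pmaex S - 1), S.sup id - pmaex S) ∈ maexTriples N := by
  obtain ⟨hsub, hsum⟩ := mem_Dpart.1 hS
  have hdecomp := eq_inter_union_Icc_of_pmaex_ne_zero (fun h0 => by simpa using hsub h0) h
  have hlt := (pmaex_spec h).1
  have hsupN : S.sup id ≤ N := Finset.sup_le fun a ha => (mem_Icc.1 (hsub ha)).2
  have hT : S ∩ Icc 1 (pmaex S - 1) ⊆ Icc 1 (pmaex S - 1) := inter_subset_right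
  refine mem_maexTriples.2 ⟨⟨?_, inter_subset_left.trans hsub, ?_⟩, hT, ?_⟩
  · simp only [mem_Icc]; omega
  · simp only [mem_Icc]; omega
  · rw [← sum_union_Icc hT, add_tsub_cancel_of_le hlt.le, ← hdecomp, hsum]

theorem union_Icc_mem_Dpart {N k m : ℕ} {T : Finset ℕ} (hp : (k, T, m) ∈ maexTriples N) :
    T ∪ Icc (k + 1) (k + m) ∈ Dpart N := by
  obtain ⟨-, hT, hsum⟩ := mem_maexTriples.1 hp
  rw [← sum_union_Icc hT] at hsum
  refine mem_Dpart.2 ⟨fun a ha => mem_Icc.2 ⟨?_, ?_⟩, hsum⟩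
  · rcases mem_union.1 ha with ha | ha
    exacts [(mem_Icc.1 (hT ha)).1, by have := (mem_Icc.1 ha).1; omega]
  · exact hsum ▸ single_le_sum (f := id) (by simp) ha

theorem sigmadmaex_eq_sum_maexTriples (N : ℕ) : sigmadmaex N = ∑ p ∈ maexTriples N, p.1 := by
  rw [sigmadmaex, ← sum_filter_ne_zero]
  refine sum_nbij' (fun S => (pmaex S, S ∩ Icc 1 (pmaex S - 1), S.sup id - pmaex S))
    (fun p => p.2.1 ∪ Icc (p.1 + 1) (p.1 + p.2.2)) ?_ ?_ ?_ ?_ fun _ _ => rfl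
  · intro S hS
    obtain ⟨hS, h⟩ := mem_filter.1 hS
    exact mem_maexTriples_of_mem_Dpart hS h
  · rintro ⟨k, T, m⟩ hp
    obtain ⟨⟨hk, -, hm⟩, hT, -⟩ := mem_maexTriples.1 hp
    rw [mem_filter, pmaex_union_Icc hT (Nat.one_le_iff_ne_zero.1 (mem_Icc.1 hm).1)]
    exact ⟨union_Icc_mem_Dpart hp, Nat.one_le_iff_ne_zero.1 (mem_Icc.1 hk).1⟩
  · intro S hS
    obtain ⟨hS, h⟩ := mem_filter.1 hS
    have h0 : 0 ∉ S := fun h0 => by simpa using (mem_Dpart.1 hS).1 h0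
    simp only [add_tsub_cancel_of_le (pmaex_spec h).1.le]
    exact (eq_inter_union_Icc_of_pmaex_ne_zero h0 h).symm
  · rintro ⟨k, T, m⟩ hp
    obtain ⟨⟨-, -, hm⟩, hT, -⟩ := mem_maexTriples.1 hp
    have hm : m ≠ 0 := Nat.one_le_iff_ne_zero.1 (mem_Icc.1 hm).1
    simp only [pmaex_union_Icc hT hm, sup_union_Icc hT hm, union_Icc_inter_Icc hT,
      add_tsub_cancel_left]

theorem coeff_natCast_mul_X_pow_mul_X_pow {R : Type*} [CommSemiring R] (N k a b : ℕ) :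
    coeff N ((k : R⟦X⟧) * X ^ a * X ^ b) = if a + b = N then (k : R) else 0 := by
  rw [mul_assoc, ← pow_add, ← map_natCast (C (R := R)), coeff_C_mul_X_pow]
  simp only [eq_comm]

theorem coeff_maexSeries (N : ℕ) : coeff N maexSeries = ∑ p ∈ maexTriples N, (p.1 : ℚ) := by
  rw [maexSeries, coeff_mk, map_sum, maexTriples, sum_filter, sum_product]
  refine sum_congr rfl fun k hk => ?_
  rw [sum_product, prod_range_one_add_X_pow, mul_sum (a := (k : ℚ⟦X⟧)), sum_mul, map_sum]
  have hsub : (Icc 1 (k - 1)).powerset ⊆ (Icc 1 N).powerset :=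
    powerset_mono.2 (Icc_subset_Icc_right (by have := mem_Icc.1 hk; omega))
  rw [← sum_subset hsub fun T _ hT =>
    sum_eq_zero fun m _ => if_neg fun h => hT (mem_powerset.2 h.1)]
  refine sum_congr rfl fun T hT => ?_
  rw [mul_sum, map_sum]
  refine sum_congr rfl fun m _ => ?_
  simp only [coeff_natCast_mul_X_pow_mul_X_pow, mem_powerset.1 hT, true_and]

/-- `Σ_{n≥0} σ_d maex(n) q^n = Σ_{k≥1} k (−q;q)_{k−1} Σ_{m≥1} q^{m(m+1)/2+km}`. -/
theorem stmt_12 : (PowerSeries.mk fun n => (sigmadmaex n : ℚ)) = maexSeries := by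
  ext N
  rw [coeff_mk, coeff_maexSeries, sigmadmaex_eq_sum_maexTriples, Nat.cast_sum]
end

section
/- For each positive integer k and integer n, the number of partitions of n into distinct parts with maximal excludant equal to k equals the number of pairs (π', m) where m ≥ 1 and π' is a partition into distinct parts all ≤ k−1, such that |π'| + m(m+1)/2 + km = n. -/
open Finset

/-- Gauss-type sum for the gapfree run `k+1, ..., k+m`. -/
lemma aux_sum_Ioc (k m : ℕ) : (Finset.Ioc k (k+m)).sum id = m*(m+1)/2 + k*m := by
  induction m with
  | zero => simp
  | succ m ih =>
    have hins : Finset.Ioc k (k+(m+1)) = insert (k+m+1) (Finset.Ioc k (k+m)) := by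
      ext x; simp only [Finset.mem_Ioc, Finset.mem_insert]; omega
    rw [hins, Finset.sum_insert (by simp [Finset.mem_Ioc]), ih]
    obtain ⟨c, hc⟩ := Nat.even_mul_succ_self m
    have hd1 : m*(m+1)/2 = c := by rw [hc]; omega
    have hd2 : (m+1)*(m+1+1)/2 = c + m + 1 := by
      rw [show (m+1)*(m+1+1) = m*(m+1)+2*(m+1) from by ring, hc]; omega
    rw [hd1, hd2, Nat.mul_succ]
    simp only [id]
    ring

/-- Characterization of `pmaex S = k` for `k ≥ 1`: `k` is missing, `k` is below the
largest part, and every integer in `(k, sup S]` is a part. -/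
lemma aux_maex_char (k : ℕ) (hk : 0 < k) (S : Finset ℕ) :
    pmaex S = k ↔ (k ∉ S ∧ k < S.sup id ∧ Finset.Ioc k (S.sup id) ⊆ S) := by
  set T : Set ℕ := {m : ℕ | m < S.sup id ∧ m ∉ S} with hT
  have hbdd : BddAbove T := ⟨S.sup id, fun m hm => hm.1.le⟩
  constructor
  · intro hpk
    have hTne : T.Nonempty := by
      by_contra h
      rw [Set.not_nonempty_iff_eq_empty] at h
      rw [pmaex, ← hT, h] at hpk
      simp [csSup_empty] at hpk
      omega
    have hkT : k ∈ T := by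
      have := Nat.sSup_mem hTne hbdd
      rwa [show sSup T = k from hpk] at this
    obtain ⟨hklt, hknot⟩ := hkT
    refine ⟨hknot, hklt, fun j hj => ?_⟩
    rw [Finset.mem_Ioc] at hj
    rcases eq_or_lt_of_le hj.2 with heq | hlt
    · have hSne : S.Nonempty := by
        rcases S.eq_empty_or_nonempty with h | h
        · simp [h] at hklt
        · exact h
      obtain ⟨b, hb, hbe⟩ := Finset.exists_mem_eq_sup S hSne id
      rw [heq, hbe]; exact hb
    · by_contra hjS
      have : j ∈ T := ⟨hlt, hjS⟩
      have := le_csSup hbdd this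
      rw [show sSup T = k from hpk] at this
      omega
  · rintro ⟨hknot, hklt, hsub⟩
    have hkT : k ∈ T := ⟨hklt, hknot⟩
    refine le_antisymm (csSup_le ⟨k, hkT⟩ fun m hm => ?_) (le_csSup hbdd hkT)
    by_contra h
    push_neg at h
    exact hm.2 (hsub (Finset.mem_Ioc.mpr ⟨h, hm.1.le⟩))

/-- Decomposition of a partition with maex `k` into its small parts and its gapfree run. -/
lemma aux_decomp (k : ℕ) (S : Finset ℕ) (h0 : 0 ∉ S) (hknot : k ∉ S)
    (hsub : Finset.Ioc k (S.sup id) ⊆ S) :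
    S = S.filter (· < k) ∪ Finset.Ioc k (S.sup id) := by
  ext x
  simp only [Finset.mem_union, Finset.mem_filter, Finset.mem_Ioc]
  constructor
  · intro hx
    rcases lt_trichotomy x k with h | h | h
    · exact Or.inl ⟨hx, h⟩
    · exact absurd (h ▸ hx) hknot
    · exact Or.inr ⟨h, Finset.le_sup (f := id) hx⟩
  · rintro (⟨hx, _⟩ | hx)
    · exact hx
    · exact hsub (Finset.mem_Ioc.mpr hx)

/-- The number of distinct-parts partitions of `n` with maximal excludant `k` equals
the number of pairs `(π', m)` with `m ≥ 1` and `π'` a distinct-parts partition with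
all parts `≤ k − 1`, such that `|π'| + m(m+1)/2 + km = n`. -/
theorem stmt_13 (k : ℕ) (hk : 0 < k) (n : ℕ) :
    ((Dpart n).filter (fun S => pmaex S = k)).card =
      (((Finset.Icc 1 n).powerset ×ˢ Finset.Icc 1 n).filter
        (fun p => (∀ x ∈ p.1, x ≤ k - 1) ∧
          p.1.sum id + p.2 * (p.2 + 1) / 2 + k * p.2 = n)).card := by
  apply Finset.card_bij' (fun S _ => (S.filter (· < k), S.sup id - k))
    (fun p _ => p.1 ∪ Finset.Ioc k (k + p.2))
  -- forward map lands in target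
  · intro S hS
    simp only [Dpart, Finset.mem_filter, Finset.mem_powerset] at hS
    obtain ⟨⟨hSsub, hSsum⟩, hpk⟩ := hS
    rw [aux_maex_char k hk] at hpk
    obtain ⟨hknot, hklt, hsub⟩ := hpk
    have h0 : (0:ℕ) ∉ S := fun h => by simpa using hSsub h
    have hdec := aux_decomp k S h0 hknot hsub
    have hL : S.sup id ∈ S := by
      have hSne : S.Nonempty := ⟨_, hsub (Finset.mem_Ioc.mpr ⟨hklt, le_refl _⟩)⟩
      obtain ⟨b, hb, hbe⟩ := Finset.exists_mem_eq_sup S hSne id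
      rw [hbe]; exact hb
    have hLn : S.sup id ≤ n := (Finset.mem_Icc.mp (hSsub hL)).2
    have hdisj : Disjoint (S.filter (· < k)) (Finset.Ioc k (S.sup id)) := by
      rw [Finset.disjoint_left]
      intro a ha hb
      rw [Finset.mem_filter] at ha
      rw [Finset.mem_Ioc] at hb
      omega
    have hsum : (S.filter (· < k)).sum id + (Finset.Ioc k (S.sup id)).sum id = n := by
      rw [← Finset.sum_union hdisj, ← hdec, hSsum]
    have hIoc : Finset.Ioc k (S.sup id) = Finset.Ioc k (k + (S.sup id - k)) := by
      congr 1; omega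
    simp only [Finset.mem_filter, Finset.mem_product, Finset.mem_powerset, Finset.mem_Icc]
    refine ⟨⟨fun x hx => hSsub (Finset.mem_filter.mp hx).1, ⟨by omega, by omega⟩⟩,
      fun x hx => ?_, ?_⟩
    · have h1 := (Finset.mem_Icc.mp (hSsub hx.1)).1
      omega
    · rw [hIoc, aux_sum_Ioc] at hsum
      omega
  -- backward map lands in source
  · intro p hp
    simp only [Finset.mem_filter, Finset.mem_product, Finset.mem_powerset, Finset.mem_Icc] at hp
    obtain ⟨⟨hpsub, hm1, hmn⟩, hple, hpsum⟩ := hp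
    obtain ⟨π, m⟩ := p
    simp only at *
    have hdisj : Disjoint π (Finset.Ioc k (k + m)) := by
      rw [Finset.disjoint_left]
      intro a ha hb
      have := hple a ha
      rw [Finset.mem_Ioc] at hb
      omega
    have hsum : (π ∪ Finset.Ioc k (k+m)).sum id = n := by
      rw [Finset.sum_union hdisj, aux_sum_Ioc]
      simp only [id_eq] at hpsum ⊢
      omega
    have hsup : (π ∪ Finset.Ioc k (k+m)).sup id = k + m := by
      apply le_antisymm
      · apply Finset.sup_le
        intro b hb
        rcases Finset.mem_union.mp hb with h | h
        · have := hple b h; simp only [id]; omega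
        · exact (Finset.mem_Ioc.mp h).2
      · exact Finset.le_sup (f := id) (Finset.mem_union_right _
          (Finset.mem_Ioc.mpr ⟨by omega, le_refl _⟩))
    simp only [Dpart, Finset.mem_filter, Finset.mem_powerset]
    refine ⟨⟨fun x hx => ?_, hsum⟩, ?_⟩
    · rcases Finset.mem_union.mp hx with h | h
      · have h1 := Finset.mem_Icc.mp (hpsub h)
        have h2 : x ≤ (π ∪ Finset.Ioc k (k+m)).sum id :=
          Finset.single_le_sum (f := id) (fun i _ => Nat.zero_le _) hx
        rw [Finset.mem_Icc]; omega
      · have h1 := Finset.mem_Ioc.mp h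
        have h2 : x ≤ (π ∪ Finset.Ioc k (k+m)).sum id :=
          Finset.single_le_sum (f := id) (fun i _ => Nat.zero_le _) hx
        rw [Finset.mem_Icc]; omega
    · rw [aux_maex_char k hk, hsup]
      refine ⟨?_, by omega, fun j hj => Finset.mem_union_right _ hj⟩
      intro h
      rcases Finset.mem_union.mp h with h | h
      · have := hple k h; omega
      · simp [Finset.mem_Ioc] at h
  -- left inverse
  · intro S hS
    simp only [Dpart, Finset.mem_filter, Finset.mem_powerset] at hS
    obtain ⟨⟨hSsub, hSsum⟩, hpk⟩ := hS
    rw [aux_maex_char k hk] at hpk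
    obtain ⟨hknot, hklt, hsub⟩ := hpk
    have h0 : (0:ℕ) ∉ S := fun h => by simpa using hSsub h
    have hdec := aux_decomp k S h0 hknot hsub
    have hIoc : Finset.Ioc k (k + (S.sup id - k)) = Finset.Ioc k (S.sup id) := by
      congr 1; omega
    rw [hIoc, ← hdec]
  -- right inverse
  · intro p hp
    simp only [Finset.mem_filter, Finset.mem_product, Finset.mem_powerset, Finset.mem_Icc] at hp
    obtain ⟨⟨hpsub, hm1, hmn⟩, hple, hpsum⟩ := hp
    obtain ⟨π, m⟩ := p
    simp only at *
    have hsup : (π ∪ Finset.Ioc k (k+m)).sup id = k + m := by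
      apply le_antisymm
      · apply Finset.sup_le
        intro b hb
        rcases Finset.mem_union.mp hb with h | h
        · have := hple b h; simp only [id]; omega
        · exact (Finset.mem_Ioc.mp h).2
      · exact Finset.le_sup (f := id) (Finset.mem_union_right _
          (Finset.mem_Ioc.mpr ⟨by omega, le_refl _⟩))
    have hfil : (π ∪ Finset.Ioc k (k+m)).filter (· < k) = π := by
      ext x
      simp only [Finset.mem_filter, Finset.mem_union, Finset.mem_Ioc]
      constructor
      · rintro ⟨h | h, hlt⟩
        · exact h
        · omega
      · intro hx
        have := hple x hx
        exact ⟨Or.inl hx, by omega⟩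
    rw [hsup, hfil]
    simp
end
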